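/- arXiv:1501.00348 — 5 statements merged into one kernel-verified Lean document; each statement's English description precedes it below -/
import Mathlib

section
/- If a convex open domain D in an affine chart of the projective sphere Sⁿ is not properly convex (i.e., its closure contains a pair of antipodal points), then D contains a complete affine line. -/
/-! An open convex cone `C` absorbs its closure: for `p ∈ C` and `w ∈ closure C`, the midpoint
of `p` and `w` lies in the interior of `C`, so `p + w ∈ C` after doubling. Scaling `w` shows
that the whole ray `p + s • w`, `s ≥ 0`, lies in `C`; applying this to `v` and `-v` gives the
full line through any point of `C`, and `C` is nonempty because its closure contains `v`. -/

section OpenConvexCone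

variable {𝕜 E : Type*} [Field 𝕜] [LinearOrder 𝕜] [IsStrictOrderedRing 𝕜]
  [AddCommGroup E] [Module 𝕜 E] [TopologicalSpace E]
  [IsTopologicalAddGroup E] [ContinuousConstSMul 𝕜 E] {C : Set E}

theorem IsOpen.add_mem_of_mem_of_mem_closure (hopen : IsOpen C) (hconv : Convex 𝕜 C)
    (hcone : ∀ x ∈ C, ∀ t : 𝕜, 0 < t → t • x ∈ C) {p w : E} (hp : p ∈ C)
    (hw : w ∈ closure C) : p + w ∈ C := by
  have hmid : (1 / 2 : 𝕜) • p + (1 / 2 : 𝕜) • w ∈ C := by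
    rw [← hopen.interior_eq] at hp ⊢
    exact hconv.combo_interior_closure_mem_interior hp hw
      (by positivity) (by positivity) (add_halves (1 : 𝕜))
  simpa [smul_add, smul_smul] using hcone _ hmid 2 two_pos

theorem IsOpen.add_smul_mem_of_mem_of_mem_closure (hopen : IsOpen C) (hconv : Convex 𝕜 C)
    (hcone : ∀ x ∈ C, ∀ t : 𝕜, 0 < t → t • x ∈ C) {p w : E} (hp : p ∈ C)
    (hw : w ∈ closure C) {s : 𝕜} (hs : 0 ≤ s) : p + s • w ∈ C := by
  rcases hs.eq_or_lt with rfl | hs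
  · simpa using hp
  · have hsum := hopen.add_mem_of_mem_of_mem_closure hconv hcone
      (hcone p hp s⁻¹ (inv_pos.mpr hs)) hw
    simpa [smul_add, smul_smul, hs.ne'] using hcone _ hsum s hs

theorem IsOpen.add_smul_mem_of_mem_closure_of_neg_mem_closure (hopen : IsOpen C)
    (hconv : Convex 𝕜 C) (hcone : ∀ x ∈ C, ∀ t : 𝕜, 0 < t → t • x ∈ C) {p v : E} (hp : p ∈ C)
    (hv : v ∈ closure C) (hv' : -v ∈ closure C) (t : 𝕜) : p + t • v ∈ C := by
  rcases le_total 0 t with ht | ht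
  · exact hopen.add_smul_mem_of_mem_of_mem_closure hconv hcone hp hv ht
  · simpa using hopen.add_smul_mem_of_mem_of_mem_closure hconv hcone hp hv' (neg_nonneg.mpr ht)

end OpenConvexCone

theorem not_properly_convex_contains_complete_affine_line_general
    {n : ℕ} (C : Set (EuclideanSpace ℝ (Fin (n + 1))))
    (hopen : IsOpen C) (hconv : Convex ℝ C)
    (hcone : ∀ x ∈ C, ∀ t : ℝ, 0 < t → t • x ∈ C)
    (v : EuclideanSpace ℝ (Fin (n + 1)))
    (hvc : v ∈ closure C) (hvc' : -v ∈ closure C) :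
    ∃ p ∈ C, ∀ t : ℝ, p + t • v ∈ C := by
  obtain ⟨p, hp⟩ : C.Nonempty := closure_nonempty_iff.mp ⟨v, hvc⟩
  exact ⟨p, hp, hopen.add_smul_mem_of_mem_closure_of_neg_mem_closure hconv hcone hp hvc hvc'⟩

/-- A convex open domain `D` in an affine chart of the projective
sphere `Sⁿ` which is not properly convex contains a complete affine line.

We model a convex domain in `Sⁿ` by the open convex cone `C ⊆ ℝ^{n+1}` over it.
The condition that `D` lies in an affine chart is that some linear functional
`f` is positive on `C`.  Failure of proper convexity means that the closure of
`D` contains an antipodal pair, i.e. there is `v ≠ 0` with both `v` and `-v` in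
the closure of `C`.  A complete affine line in `D` corresponds to a full
affine line `t ↦ p + t • v` contained in `C` (it lies in the affine chart
since `f v = 0`). -/
theorem not_properly_convex_contains_complete_affine_line
    {n : ℕ} (C : Set (EuclideanSpace ℝ (Fin (n + 1))))
    (hopen : IsOpen C) (hconv : Convex ℝ C)
    (hcone : ∀ x ∈ C, ∀ t : ℝ, 0 < t → t • x ∈ C)
    (f : EuclideanSpace ℝ (Fin (n + 1)) →ₗ[ℝ] ℝ)
    (hchart : ∀ x ∈ C, 0 < f x)
    (v : EuclideanSpace ℝ (Fin (n + 1))) (hv : v ≠ 0)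
    (hvc : v ∈ closure C) (hvc' : -v ∈ closure C) :
    ∃ p ∈ C, ∀ t : ℝ, p + t • v ∈ C :=
  not_properly_convex_contains_complete_affine_line_general C hopen hconv hcone v hvc hvc'
end

section
/- The dual of a strict join is the strict join of the duals: for properly convex compact domains A of dimension k and B of dimension n−k−1 lying in complementary subspaces, (A * B)* = A* * B*. -/
/-!
The projections `πA`, `πB` of `ℝⁿ⁺¹ = VA ⊕ VB` are continuous and map `CA + CB` into `CA` and
`CB`; writing `x = πA x + πB x` gives `closure (CA + CB) = closure CA + closure CB`. A functional
`f` splits as `f ∘ πA + f ∘ πB`, the summands vanishing on `VB` and `VA`. As both closed cones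
contain `0`, `f` is positive on `closure CA + closure CB` minus the origin iff each summand is
positive on its own closed cone minus the origin.
-/

open scoped Pointwise

open Filter Topology Submodule

lemma zero_mem_closure_of_smul_mem {E : Type*} [AddCommGroup E] [Module ℝ E] [TopologicalSpace E]
    [ContinuousSMul ℝ E] {C : Set E} (hne : C.Nonempty)
    (hcone : ∀ x ∈ C, ∀ t : ℝ, 0 < t → t • x ∈ C) : (0 : E) ∈ closure C := by
  obtain ⟨x, hx⟩ := hne
  have htend : Tendsto (fun t : ℝ => t • x) (𝓝[>] 0) (𝓝 0) := by
    simpa using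
      (tendsto_nhdsWithin_of_tendsto_nhds (tendsto_id (x := 𝓝 (0 : ℝ)))).smul_const x
  exact mem_closure_of_tendsto htend (eventually_nhdsWithin_of_forall fun t ht => hcone x hx t ht)

section Complement

variable {E : Type*} [AddCommGroup E] [Module ℝ E] {V W : Submodule ℝ E}

lemma closure_add_eq_of_isCompl [TopologicalSpace E] [IsTopologicalAddGroup E]
    [ContinuousSMul ℝ E] [T2Space E] [FiniteDimensional ℝ E] (hVW : IsCompl V W)
    {A B : Set E} (hA : A ⊆ V) (hB : B ⊆ W) :
    closure (A + B) = closure A + closure B := by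
  refine subset_antisymm (fun x hx => ?_) ?_
  · have hV : Set.MapsTo (V.projection W hVW) (A + B) A := by
      rintro _ ⟨a, ha, b, hb, rfl⟩
      simpa [projection_apply_of_mem_left hVW (hA ha),
        projection_apply_of_mem_right hVW (hB hb)] using ha
    have hW : Set.MapsTo (W.projection V hVW.symm) (A + B) B := by
      rintro _ ⟨a, ha, b, hb, rfl⟩
      simpa [projection_apply_of_mem_left hVW.symm (hB hb),
        projection_apply_of_mem_right hVW.symm (hA ha)] using hb
    rw [← projection_add_projection_eq_self hVW x]
    exact Set.add_mem_add
      (map_mem_closure (LinearMap.continuous_of_finiteDimensional _) hx hV)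
      (map_mem_closure (LinearMap.continuous_of_finiteDimensional _) hx hW)
  · rintro _ ⟨a, ha, b, hb, rfl⟩
    exact map_mem_closure₂ continuous_add ha hb fun x hx y hy => Set.add_mem_add hx hy

lemma setOf_pos_on_add_eq_of_isCompl (hVW : IsCompl V W) {A B : Set E} (hA : A ⊆ V) (hB : B ⊆ W)
    (h0A : 0 ∈ A) (h0B : 0 ∈ B) :
    {f : E →ₗ[ℝ] ℝ | ∀ x ∈ A + B, x ≠ 0 → 0 < f x} =
      {f : E →ₗ[ℝ] ℝ | ∃ fa fb : E →ₗ[ℝ] ℝ,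
        (∀ x ∈ W, fa x = 0) ∧ (∀ x ∈ A, x ≠ 0 → 0 < fa x) ∧
        (∀ x ∈ V, fb x = 0) ∧ (∀ x ∈ B, x ≠ 0 → 0 < fb x) ∧ f = fa + fb} := by
  ext f
  constructor
  · intro hf
    refine ⟨f ∘ₗ V.projection W hVW, f ∘ₗ W.projection V hVW.symm,
      fun x hx => by simp [projection_apply_of_mem_right hVW hx], fun a ha ha0 => ?_,
      fun x hx => by simp [projection_apply_of_mem_right hVW.symm hx], fun b hb hb0 => ?_, ?_⟩
    · simpa [projection_apply_of_mem_left hVW (hA ha)] using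
        hf a (by simpa using Set.add_mem_add ha h0B) ha0
    · simpa [projection_apply_of_mem_left hVW.symm (hB hb)] using
        hf b (by simpa using Set.add_mem_add h0A hb) hb0
    · ext x
      simp [← map_add, projection_add_projection_eq_self]
  · rintro ⟨fa, fb, hfaW, hfaA, hfbV, hfbB, rfl⟩ _ ⟨a, ha, b, hb, rfl⟩ hab
    have hfb : 0 ≤ fb b := by
      rcases eq_or_ne b 0 with rfl | hb0
      · simp
      · exact (hfbB b hb hb0).le
    have hsplit : (fa + fb) (a + b) = fa a + fb b := by
      simp [hfaW b (hB hb), hfbV a (hA ha)]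
    rw [hsplit]
    rcases eq_or_ne a 0 with rfl | ha0
    · simpa using hfbB b hb (by simpa using hab)
    · exact add_pos_of_pos_of_nonneg (hfaA a ha ha0) hfb

end Complement

theorem dual_of_strict_join_general
    {n : ℕ} (VA VB : Submodule ℝ (EuclideanSpace ℝ (Fin (n + 1))))
    (hcompl : IsCompl VA VB)
    (CA CB : Set (EuclideanSpace ℝ (Fin (n + 1))))
    (hCAsub : CA ⊆ (VA : Set (EuclideanSpace ℝ (Fin (n + 1)))))
    (hCBsub : CB ⊆ (VB : Set (EuclideanSpace ℝ (Fin (n + 1)))))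
    (hCAcone : ∀ x ∈ CA, ∀ t : ℝ, 0 < t → t • x ∈ CA)
    (hCAne : CA.Nonempty)
    (hCBcone : ∀ x ∈ CB, ∀ t : ℝ, 0 < t → t • x ∈ CB)
    (hCBne : CB.Nonempty) :
    {f : EuclideanSpace ℝ (Fin (n + 1)) →ₗ[ℝ] ℝ |
        ∀ x ∈ closure (CA + CB), x ≠ 0 → 0 < f x} =
      {f : EuclideanSpace ℝ (Fin (n + 1)) →ₗ[ℝ] ℝ |
          ∃ fa fb : EuclideanSpace ℝ (Fin (n + 1)) →ₗ[ℝ] ℝ,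
            (∀ x ∈ VB, fa x = 0) ∧ (∀ x ∈ closure CA, x ≠ 0 → 0 < fa x) ∧
            (∀ x ∈ VA, fb x = 0) ∧ (∀ x ∈ closure CB, x ≠ 0 → 0 < fb x) ∧
            f = fa + fb} := by
  have hclA : closure CA ⊆ VA := closure_minimal hCAsub VA.closed_of_finiteDimensional
  have hclB : closure CB ⊆ VB := closure_minimal hCBsub VB.closed_of_finiteDimensional
  rw [closure_add_eq_of_isCompl hcompl hCAsub hCBsub]
  exact setOf_pos_on_add_eq_of_isCompl hcompl hclA hclB
    (zero_mem_closure_of_smul_mem hCAne hCAcone) (zero_mem_closure_of_smul_mem hCBne hCBcone)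

/-- The dual of a strict join is the strict join of the duals.
A properly convex compact `k`-dimensional domain `A` and `(n-k-1)`-dimensional
domain `B` in complementary subspaces of `Sⁿ` correspond to convex cones
`CA ⊆ VA`, `CB ⊆ VB` with `VA, VB` complementary subspaces of `ℝ^{n+1}` of
dimensions `k+1` and `n-k`.  The strict join `A * B` corresponds to the cone
`CA + CB`, and the dual of `A` (resp. `B`) corresponds to the cone `DA` (resp.
`DB`) of functionals vanishing on `VB` (resp. `VA`) and strictly positive on
`closure CA ∖ {0}` (resp. `closure CB ∖ {0}`), using the direct sum
decomposition `ℝ^{(n+1)*} = VA* ⊕ VB*`.  Then `(A * B)* = A* * B*`. -/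
theorem dual_of_strict_join
    {n k : ℕ} (VA VB : Submodule ℝ (EuclideanSpace ℝ (Fin (n + 1))))
    (hcompl : IsCompl VA VB)
    (hdimA : Module.finrank ℝ VA = k + 1)
    (hdimB : Module.finrank ℝ VB = n - k)
    (CA CB : Set (EuclideanSpace ℝ (Fin (n + 1))))
    (hCAsub : CA ⊆ (VA : Set (EuclideanSpace ℝ (Fin (n + 1)))))
    (hCBsub : CB ⊆ (VB : Set (EuclideanSpace ℝ (Fin (n + 1)))))
    (hCAconv : Convex ℝ CA) (hCAcone : ∀ x ∈ CA, ∀ t : ℝ, 0 < t → t • x ∈ CA)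
    (hCAne : CA.Nonempty)
    (hCAprop : ∀ v ∈ closure CA, -v ∈ closure CA → v = 0)
    (hCBconv : Convex ℝ CB) (hCBcone : ∀ x ∈ CB, ∀ t : ℝ, 0 < t → t • x ∈ CB)
    (hCBne : CB.Nonempty)
    (hCBprop : ∀ v ∈ closure CB, -v ∈ closure CB → v = 0) :
    {f : EuclideanSpace ℝ (Fin (n + 1)) →ₗ[ℝ] ℝ |
        ∀ x ∈ closure (CA + CB), x ≠ 0 → 0 < f x} =
      {f : EuclideanSpace ℝ (Fin (n + 1)) →ₗ[ℝ] ℝ |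
          ∃ fa fb : EuclideanSpace ℝ (Fin (n + 1)) →ₗ[ℝ] ℝ,
            (∀ x ∈ VB, fa x = 0) ∧ (∀ x ∈ closure CA, x ≠ 0 → 0 < fa x) ∧
            (∀ x ∈ VA, fb x = 0) ∧ (∀ x ∈ closure CB, x ≠ 0 → 0 < fb x) ∧
            f = fa + fb} :=
  dual_of_strict_join_general VA VB hcompl CA CB hCAsub hCBsub hCAcone hCAne hCBcone hCBne
end

section
/- Let Ω be a properly convex open domain in ℝPⁿ whose boundary is the union of a strictly convex smooth open hypersurface S and its complement, and let Ω' ⊆ Ω be an open subset whose boundary inside Ω is a strictly convex smooth hypersurface; then Ω' is convex, hence properly convex. -/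
/-!
Fix `x ∈ Ω'`. The set of `z` with `[x, z] ⊆ Ω'` is open, and it is closed in `Ω'`: a segment
`[x, z]` that is a limit of such segments lies in `closure Ω' ∩ Ω`, and at a point `p ∉ Ω'` of it
local convexity gives a convex open `C = Ω' ∩ ball p ε`; `p` is the midpoint of a point of `C`
and a point of `closure C` on the segment, hence `p ∈ C`.
Connectedness of `Ω'` then gives `[x, z] ⊆ Ω'` for every `z ∈ Ω'`.
-/

open Set Metric Filter Topology

section TopologicalVectorSpace

variable {E : Type*} [AddCommGroup E] [Module ℝ E] [TopologicalSpace E]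
  [IsTopologicalAddGroup E] [ContinuousSMul ℝ E]

theorem isOpen_setOf_segment_subset {s : Set E} (hs : IsOpen s) (x : E) :
    IsOpen {z | segment ℝ x z ⊆ s} := by
  simp only [segment_eq_image_lineMap, image_subset_iff]
  refine isOpen_iff_mem_nhds.2 fun z hz =>
    isCompact_Icc.eventually_forall_of_forall_eventually fun t ht => ?_
  have hcont : Continuous fun p : E × ℝ => AffineMap.lineMap x p.1 p.2 := by fun_prop
  exact hcont.continuousAt.preimage_mem_nhds (hs.mem_nhds (hz ht))

theorem segment_subset_closure_of_mem_closure {s : Set E} {x z : E}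
    (hz : z ∈ closure {z | segment ℝ x z ⊆ s}) : segment ℝ x z ⊆ closure s := by
  rw [segment_eq_image_lineMap]
  rintro _ ⟨t, ht, rfl⟩
  have hmaps : MapsTo (fun y => AffineMap.lineMap x y t) {z | segment ℝ x z ⊆ s} s :=
    fun y hy => hy (segment_eq_image_lineMap ℝ x y ▸ mem_image_of_mem _ ht)
  exact hmaps.closure (by fun_prop) hz

theorem IsOpen.mem_of_convex_of_mem_openSegment {C : Set E} (hCopen : IsOpen C)
    (hC : Convex ℝ C) {a b p : E} (ha : a ∈ C) (hb : b ∈ closure C)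
    (hp : p ∈ openSegment ℝ a b) : p ∈ C := by
  rw [← hCopen.interior_eq] at ha ⊢
  exact hC.openSegment_interior_closure_subset_interior ha hb hp

end TopologicalVectorSpace

section Normed

variable {E : Type*} [NormedAddCommGroup E] [NormedSpace ℝ E]

theorem Convex.exists_convex_ball_inter {s U : Set E} {p : E} (hconv : Convex ℝ (s ∩ U))
    (hU : U ∈ 𝓝 p) : ∃ ε > 0, Convex ℝ (ball p ε ∩ s) := by
  obtain ⟨ε, hε, hball⟩ := Metric.mem_nhds_iff.1 hU
  have hεU : ball p ε ∩ s = ball p ε ∩ (s ∩ U) := by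
    ext y
    exact ⟨fun h => ⟨h.1, h.2, hball h.1⟩, fun h => ⟨h.1, h.2.1⟩⟩
  exact ⟨ε, hε, hεU ▸ (convex_ball p ε).inter hconv⟩

theorem IsOpen.segment_subset_of_subset_closure {s : Set E} (hs : IsOpen s) {x z : E}
    (hx : x ∈ s) (hz : z ∈ s) (hcl : segment ℝ x z ⊆ closure s)
    (hloc : ∀ p ∈ segment ℝ x z, p ∉ s → ∃ U ∈ 𝓝 p, Convex ℝ (s ∩ U)) :
    segment ℝ x z ⊆ s := by
  set g : ℝ →ᵃ[ℝ] E := AffineMap.lineMap x z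
  have hg : Continuous g := by fun_prop
  have hgseg : ∀ t ∈ Icc (0 : ℝ) 1, g t ∈ segment ℝ x z := fun t ht =>
    segment_eq_image_lineMap ℝ x z ▸ mem_image_of_mem _ ht
  rw [segment_eq_image_lineMap, image_subset_iff]
  refine isPreconnected_Icc.subset_of_closure_inter_subset (hs.preimage hg)
    ⟨0, left_mem_Icc.2 zero_le_one, by simpa [g] using hx⟩ ?_
  rintro t ⟨htS, ht⟩
  by_contra hgt
  have ht' : t ∈ Ioo (0 : ℝ) 1 := by
    rcases eq_endpoints_or_mem_Ioo_of_mem_Icc ht with rfl | rfl | h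
    · simp [hx] at hgt
    · simp [hz] at hgt
    · exact h
  obtain ⟨U, hU, hconv⟩ := hloc (g t) (hgseg t ht) hgt
  obtain ⟨ε, hε, hC⟩ := hconv.exists_convex_ball_inter hU
  have hnhds : g ⁻¹' ball (g t) ε ∩ Ioo 0 1 ∈ 𝓝 t :=
    inter_mem (hg.continuousAt.preimage_mem_nhds (ball_mem_nhds _ hε)) (Ioo_mem_nhds ht'.1 ht'.2)
  obtain ⟨δ, hδ, hδsub⟩ := Metric.mem_nhds_iff.1 hnhds
  obtain ⟨r, hrS, hr⟩ := Metric.mem_closure_iff.1 htS δ hδ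
  -- `g t` is the midpoint of `g r ∈ s` and `g (2 * t - r) ∈ closure s`, both close to `g t`.
  have hr' : 2 * t - r ∈ ball t δ := by
    rwa [mem_ball, Real.dist_eq, show 2 * t - r - t = t - r by ring, ← Real.dist_eq]
  have hgr : g r ∈ ball (g t) ε ∩ s := ⟨(hδsub (mem_ball_comm.1 hr)).1, hrS⟩
  have hgr' : g (2 * t - r) ∈ closure (ball (g t) ε ∩ s) :=
    isOpen_ball.inter_closure ⟨(hδsub hr').1, hcl (hgseg _ (Ioo_subset_Icc_self (hδsub hr').2))⟩
  have hmid : g t ∈ openSegment ℝ (g r) (g (2 * t - r)) := by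
    rw [← image_openSegment]
    exact ⟨t, ⟨1 / 2, 1 / 2, by norm_num, by norm_num, by norm_num, by simp only [smul_eq_mul]; ring⟩,
      rfl⟩
  exact hgt ((isOpen_ball.inter hs).mem_of_convex_of_mem_openSegment hC hgr hgr' hmid).2

end Normed

theorem strictly_convex_boundary_implies_properly_convex_general
    {n : ℕ} (Ω Ω' : Set (EuclideanSpace ℝ (Fin n)))
    (hΩconv : Convex ℝ Ω) (hΩbdd : Bornology.IsBounded Ω)
    (hsub : Ω' ⊆ Ω) (h'open : IsOpen Ω') (h'conn : IsConnected Ω')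
    (hlocconv : ∀ x ∈ frontier Ω' ∩ Ω, ∃ U ∈ nhds x, Convex ℝ (Ω' ∩ U)) :
    Convex ℝ Ω' ∧ Bornology.IsBounded Ω' := by
  refine ⟨convex_iff_segment_subset.2 fun x hx => ?_, hΩbdd.subset hsub⟩
  have hclosed : closure {z | segment ℝ x z ⊆ Ω'} ∩ Ω' ⊆ {z | segment ℝ x z ⊆ Ω'} :=
    fun z ⟨hzcl, hz⟩ => by
      have hcl := segment_subset_closure_of_mem_closure hzcl
      refine h'open.segment_subset_of_subset_closure hx hz hcl fun p hp hpΩ' => hlocconv p ⟨?_, ?_⟩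
      · rw [h'open.frontier_eq]
        exact ⟨hcl hp, hpΩ'⟩
      · exact hΩconv.segment_subset (hsub hx) (hsub hz) hp
  exact h'conn.isPreconnected.subset_of_closure_inter_subset (isOpen_setOf_segment_subset h'open x)
    ⟨x, hx, show segment ℝ x x ⊆ Ω' by simpa using hx⟩ hclosed

/-- Let `Ω` be a properly convex open domain (bounded convex open
in an affine chart) and let `Ω' ⊆ Ω` be an open connected subset whose boundary
inside `Ω` is a strictly convex smooth hypersurface; in particular `Ω'` is
locally convex along its boundary hypersurface (each point of
`frontier Ω' ∩ Ω` has a neighborhood meeting `Ω'` in a convex set, as happens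
for a hypersurface that is locally a graph of a function with positive
definite Hessian with `Ω'` on its convex side).  Then `Ω'` is convex, hence
properly convex (bounded and convex). -/
theorem strictly_convex_boundary_implies_properly_convex
    {n : ℕ} (Ω Ω' : Set (EuclideanSpace ℝ (Fin n)))
    (hΩopen : IsOpen Ω) (hΩconv : Convex ℝ Ω) (hΩbdd : Bornology.IsBounded Ω)
    (hsub : Ω' ⊆ Ω) (h'open : IsOpen Ω') (h'conn : IsConnected Ω')
    (hlocconv : ∀ x ∈ frontier Ω' ∩ Ω, ∃ U ∈ nhds x, Convex ℝ (Ω' ∩ U))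
    (hlocconv' : ∀ x ∈ Ω', ∃ U ∈ nhds x, Convex ℝ (Ω' ∩ U)) :
    Convex ℝ Ω' ∧ Bornology.IsBounded Ω' :=
  strictly_convex_boundary_implies_properly_convex_general Ω Ω' hΩconv hΩbdd hsub h'open h'conn
    hlocconv
end

section
/- Every fiber of the projection from the augmented boundary of a properly convex open domain to its boundary is a compact convex set; consequently the projection Π_Ag : Bd^Ag Ω → Bd Ω is a proper map with contractible fibers. -/
/-!
The supporting functionals at `x` form a closed convex cone `K`. It is salient: a functional `f`
with `f, -f ∈ K` is constant on the nonempty open set `Ω`, hence zero. For a salient cone,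
`K \ {0}` is convex, hence contractible, and radial projection retracts it onto the unit fiber
`sphere 0 1 ∩ K`, which is therefore contractible; the fiber is compact as a closed subset of the
unit sphere of a finite-dimensional dual. Since `Ω` is bounded, the augmented boundary is a closed
subset of the compact set `frontier Ω ×ˢ sphere 0 1`, so the projection is a continuous map out of
a compact space, hence proper.
-/

open Metric Set

theorem ContractibleSpace.of_retract {X Y : Type*} [TopologicalSpace X] [TopologicalSpace Y]
    [ContractibleSpace Y] (i : C(X, Y)) (r : C(Y, X)) (hri : r.comp i = ContinuousMap.id X) :
    ContractibleSpace X := by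
  have hi : i.Nullhomotopic := by simpa using (id_nullhomotopic Y).comp_left i
  rw [contractible_iff_id_nullhomotopic, ← hri]
  exact hi.comp_right r

namespace ConvexCone

section Module

variable {V : Type*} [AddCommGroup V] [Module ℝ V] {K : ConvexCone ℝ V}

theorem Salient.convex_diff_zero (hK : K.Salient) : Convex ℝ ((K : Set V) \ {0}) := by
  rintro f ⟨hf, hf0⟩ g ⟨hg, hg0⟩ a b ha hb hab
  rcases ha.eq_or_lt with rfl | ha
  · simpa [(zero_add b).symm.trans hab] using And.intro hg hg0
  rcases hb.eq_or_lt with rfl | hb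
  · simpa [(add_zero a).symm.trans hab] using And.intro hf hf0
  refine ⟨K.convex hf hg ha.le hb.le hab, fun hsum => ?_⟩
  have hneg : -(a • f) = b • g := neg_eq_of_add_eq_zero_right hsum
  exact hK _ (K.smul_mem ha hf) (smul_ne_zero ha.ne' (by simpa using hf0))
    (hneg ▸ K.smul_mem hb hg)

end Module

section Normed

variable {V : Type*} [NormedAddCommGroup V] [NormedSpace ℝ V] {K : ConvexCone ℝ V}

theorem Salient.contractibleSpace_sphere_inter (hK : K.Salient)
    (hne : (sphere (0 : V) 1 ∩ K).Nonempty) : ContractibleSpace ↥(sphere (0 : V) 1 ∩ K) := by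
  obtain ⟨f, hf1, hfK⟩ := hne
  have := hK.convex_diff_zero.contractibleSpace ⟨f, hfK, ne_zero_of_mem_unit_sphere ⟨f, hf1⟩⟩
  refine ContractibleSpace.of_retract (Y := ↥((K : Set V) \ {0}))
    ⟨fun g => ⟨g, g.2.2, ne_zero_of_mem_unit_sphere ⟨(g : V), g.2.1⟩⟩, by fun_prop⟩
    ⟨fun g => ⟨‖(g : V)‖⁻¹ • (g : V), mem_sphere_zero_iff_norm.2 (norm_smul_inv_norm g.2.2),
      K.smul_mem (inv_pos.2 (norm_pos_iff.2 g.2.2)) g.2.1⟩, ?_⟩ ?_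
  · exact (continuous_subtype_val.norm.inv₀ fun g => norm_ne_zero_iff.2 g.2.2).smul
      continuous_subtype_val |>.subtype_mk _
  · ext g
    simp [mem_sphere_zero_iff_norm.1 g.2.1]

end Normed

end ConvexCone

theorem ContinuousLinearMap.eq_zero_of_eqOn_const {E : Type*} [NormedAddCommGroup E]
    [NormedSpace ℝ E] {f : E →L[ℝ] ℝ} {U : Set E} {c : ℝ} (hU : IsOpen U) (hne : U.Nonempty)
    (hf : EqOn f (fun _ => c) U) : f = 0 := by
  obtain ⟨y, hy⟩ := hne
  have hconst : HasFDerivAt f (0 : E →L[ℝ] ℝ) y :=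
    (hasFDerivAt_const c y).congr_of_eventuallyEq (Filter.eventuallyEq_of_mem (hU.mem_nhds hy) hf)
  exact f.hasFDerivAt.unique hconst

variable {E : Type*} [NormedAddCommGroup E] [NormedSpace ℝ E]

def supportingCone (Ω : Set E) (x : E) : ConvexCone ℝ (E →L[ℝ] ℝ) where
  carrier := {f | ∀ y ∈ Ω, f y ≤ f x}
  smul_mem' c hc f hf y hy := by simpa using mul_le_mul_of_nonneg_left (hf y hy) hc.le
  add_mem' f hf g hg y hy := add_le_add (hf y hy) (hg y hy)

variable {Ω : Set E} {x : E}

@[simp]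
theorem mem_supportingCone {f : E →L[ℝ] ℝ} : f ∈ supportingCone Ω x ↔ ∀ y ∈ Ω, f y ≤ f x :=
  Iff.rfl

theorem isClosed_supportingCone : IsClosed (supportingCone Ω x : Set (E →L[ℝ] ℝ)) := by
  simp only [supportingCone, ConvexCone.coe_mk, ofPred_forall]
  exact isClosed_biInter fun y _ => isClosed_le (continuous_eval_const y) (continuous_eval_const x)

theorem supportingCone_salient (hopen : IsOpen Ω) (hne : Ω.Nonempty) :
    (supportingCone Ω x).Salient := by
  intro f hf hf0 hnf
  refine hf0 (f.eq_zero_of_eqOn_const hopen hne (c := f x) fun y hy => ?_)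
  have hge : f x ≤ f y := by simpa using hnf y hy
  exact le_antisymm (hf y hy) hge

theorem sphere_inter_supportingCone_nonempty (hconv : Convex ℝ Ω) (hopen : IsOpen Ω) (hx : x ∉ Ω)
    (hne : Ω.Nonempty) : (sphere (0 : E →L[ℝ] ℝ) 1 ∩ supportingCone Ω x).Nonempty := by
  obtain ⟨g, hg⟩ := geometric_hahn_banach_open_point hconv hopen hx
  have hg0 : g ≠ 0 := by
    rintro rfl
    obtain ⟨y, hy⟩ := hne
    simpa using hg y hy
  refine ⟨‖g‖⁻¹ • g, mem_sphere_zero_iff_norm.2 (norm_smul_inv_norm hg0),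
    (supportingCone Ω x).smul_mem (inv_pos.2 (norm_pos_iff.2 hg0)) fun y hy => (hg y hy).le⟩

def augmentedBoundary (Ω : Set E) : Set (E × (E →L[ℝ] ℝ)) :=
  {p | p.1 ∈ frontier Ω ∧ ‖p.2‖ = 1 ∧ ∀ y ∈ Ω, p.2 y ≤ p.2 p.1}

theorem isCompact_augmentedBoundary [FiniteDimensional ℝ E] (hbdd : Bornology.IsBounded Ω) :
    IsCompact (augmentedBoundary Ω) := by
  have hfrontier : IsCompact (frontier Ω) :=
    hbdd.isCompact_closure.of_isClosed_subset isClosed_frontier frontier_subset_closure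
  have hsupp : IsClosed {p : E × (E →L[ℝ] ℝ) | ∀ y ∈ Ω, p.2 y ≤ p.2 p.1} := by
    simp only [ofPred_forall]
    exact isClosed_biInter fun y _ => isClosed_le (continuous_snd.clm_apply continuous_const)
      (continuous_snd.clm_apply continuous_fst)
  convert (hfrontier.prod (isCompact_sphere (0 : E →L[ℝ] ℝ) 1)).inter_right hsupp using 1
  ext p
  simp [augmentedBoundary, and_assoc]

theorem isProperMap_augmentedBoundary_fst [FiniteDimensional ℝ E] (hbdd : Bornology.IsBounded Ω) :
    IsProperMap fun p : augmentedBoundary Ω => p.1.1 :=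
  have := isCompact_iff_compactSpace.1 (isCompact_augmentedBoundary hbdd)
  (continuous_fst.comp continuous_subtype_val).isProperMap

/-- For a properly convex open domain `Ω` (bounded convex open in
an affine chart of ℝPⁿ), every fiber of the projection
`Π_Ag : Bd^Ag Ω → Bd Ω` from the augmented boundary (pairs `(x,h)` of a
boundary point and a supporting hyperplane, the latter recorded as a unit
functional `f` with `f ≤ f x` on `Ω`) is a compact set, the cone over it is
convex, the fiber is contractible, and the projection is a proper map. -/
theorem augmented_boundary_fibers_and_properness
    {n : ℕ} (Ω : Set (EuclideanSpace ℝ (Fin (n + 1))))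
    (hopen : IsOpen Ω) (hconv : Convex ℝ Ω) (hbdd : Bornology.IsBounded Ω)
    (hne : Ω.Nonempty) :
    (∀ x ∈ frontier Ω,
      IsCompact {f : EuclideanSpace ℝ (Fin (n + 1)) →L[ℝ] ℝ |
          ‖f‖ = 1 ∧ ∀ y ∈ Ω, f y ≤ f x} ∧
      Convex ℝ {f : EuclideanSpace ℝ (Fin (n + 1)) →L[ℝ] ℝ | ∀ y ∈ Ω, f y ≤ f x} ∧
      ContractibleSpace ↥{f : EuclideanSpace ℝ (Fin (n + 1)) →L[ℝ] ℝ |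
          ‖f‖ = 1 ∧ ∀ y ∈ Ω, f y ≤ f x}) ∧
    IsProperMap
      (fun p : {p : EuclideanSpace ℝ (Fin (n + 1)) ×
            (EuclideanSpace ℝ (Fin (n + 1)) →L[ℝ] ℝ) //
          p.1 ∈ frontier Ω ∧ ‖p.2‖ = 1 ∧ ∀ y ∈ Ω, p.2 y ≤ p.2 p.1} =>
        p.val.1) := by
  refine ⟨fun x hx => ?_, isProperMap_augmentedBoundary_fst hbdd⟩
  have hxΩ : x ∉ Ω := (hopen.frontier_eq ▸ hx).2
  have hfiber : {f : EuclideanSpace ℝ (Fin (n + 1)) →L[ℝ] ℝ | ‖f‖ = 1 ∧ ∀ y ∈ Ω, f y ≤ f x} =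
      sphere 0 1 ∩ supportingCone Ω x := by
    ext f
    simp
  rw [hfiber]
  exact ⟨(isCompact_sphere 0 1).inter_right isClosed_supportingCone, (supportingCone Ω x).convex,
    (supportingCone_salient hopen hne).contractibleSpace_sphere_inter
      (sphere_inter_supportingCone_nonempty hconv hopen hxΩ hne)⟩
end

section
/- The duality map D_Ω sending (x,h) to (h,x) is a homeomorphism from the augmented boundary of a properly convex open domain Ω to the augmented boundary of its dual Ω*, with inverse D_{Ω*}. -/
/-- The strict dual cone of `C`, identified with a subset of the same space via
the inner product. -/
def innerStrictDualCone {n : ℕ} (C : Set (EuclideanSpace ℝ (Fin n))) :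
    Set (EuclideanSpace ℝ (Fin n)) :=
  {y | ∀ x ∈ closure C, x ≠ 0 → 0 < (inner ℝ y x : ℝ)}

/-- The augmented boundary of the properly convex domain with cone `C`: pairs
`(x, h)` of a unit boundary direction `x` of `C` and a unit vector `h`
representing a supporting hyperplane of `C` at `x` (i.e. `⟪h, ·⟫ > 0` on `C`
and `⟪h, x⟫ = 0`). -/
def augBoundary {n : ℕ} (C : Set (EuclideanSpace ℝ (Fin n))) :
    Set (EuclideanSpace ℝ (Fin n) × EuclideanSpace ℝ (Fin n)) :=
  {p | p.1 ∈ frontier C ∧ ‖p.1‖ = 1 ∧ ‖p.2‖ = 1 ∧ (inner ℝ p.2 p.1 : ℝ) = 0 ∧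
    ∀ y ∈ C, 0 < (inner ℝ p.2 y : ℝ)}

/-! Write `K* = innerDual (closure C)` for the weak dual cone. Since `closure C` contains no line,
`K*` spans the space, so it has interior, and every interior point of `K*` is strictly positive on
`closure C \ {0}`; hence `closure (innerStrictDualCone C) = K*`. Together with the bipolar theorem
`K** = closure C`, this turns each condition defining `(x, h) ∈ augBoundary C` into the
corresponding condition for `(h, x) ∈ augBoundary (innerStrictDualCone C)` and back, so the
coordinate swap restricts to a homeomorphism. -/

open Set ProperCone Filter Topology
open scoped RealInnerProductSpace

section InnerDual

variable {E : Type*} [NormedAddCommGroup E] [InnerProductSpace ℝ E]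

theorem inner_pos_of_mem_interior_of_mem_innerDual [CompleteSpace E] {A : Set E} {x y : E}
    (hx : x ∈ interior A) (hy : y ∈ innerDual A) (hy0 : y ≠ 0) : 0 < ⟪x, y⟫ := by
  have hlim : Tendsto (fun t : ℝ => x - t • y) (𝓝[>] 0) (𝓝 x) := by
    have : Continuous fun t : ℝ => x - t • y := by fun_prop
    simpa using (this.tendsto 0).mono_left nhdsWithin_le_nhds
  obtain ⟨t, hxt, ht⟩ :=
    ((hlim.eventually (isOpen_interior.mem_nhds hx)).and self_mem_nhdsWithin).exists
  have hmem : 0 ≤ ⟪x - t • y, y⟫ := hy (interior_subset hxt)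
  rw [inner_sub_left, real_inner_smul_left, real_inner_self_eq_norm_sq] at hmem
  have : 0 < t * ‖y‖ ^ 2 := mul_pos ht (by positivity)
  linarith

theorem innerDual_closure [CompleteSpace E] (s : Set E) : innerDual (closure s) = innerDual s :=
  (innerDual_le_innerDual subset_closure).antisymm fun y hy _ hx =>
    closure_minimal (t := {x | 0 ≤ ⟪x, y⟫}) (fun _ hz => hy hz)
      (isClosed_le continuous_const (continuous_id.inner continuous_const)) hx

theorem exists_properCone_coe_eq_closure {C : Set E} (hconv : Convex ℝ C)
    (hcone : ∀ x ∈ C, ∀ t : ℝ, 0 < t → t • x ∈ C) (hne : C.Nonempty) :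
    ∃ K : ProperCone ℝ E, (K : Set E) = closure C := by
  have hC : (ConvexCone.hull ℝ C : Set E) = C := by
    refine Subset.antisymm (fun x hx => ?_) ConvexCone.subset_hull
    obtain ⟨r, hr, y, hy, rfl⟩ := (ConvexCone.mem_hull_of_convex hconv).1 hx
    exact hcone y hy r hr
  lift (ConvexCone.hull ℝ C).closure to ProperCone ℝ E using
    ⟨by simpa [hC] using hne.closure, by simp [hC]⟩ with K hK
  exact ⟨K, by rw [← hC, ← ConvexCone.coe_closure, ← hK]; rfl⟩

theorem innerDual_innerDual_closure [CompleteSpace E] {C : Set E} (hconv : Convex ℝ C)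
    (hcone : ∀ x ∈ C, ∀ t : ℝ, 0 < t → t • x ∈ C) (hne : C.Nonempty) :
    (innerDual (innerDual (closure C) : Set E) : Set E) = closure C := by
  obtain ⟨K, hK⟩ := exists_properCone_coe_eq_closure hconv hcone hne
  rw [← hK, innerDual_innerDual]

theorem ProperCone.span_innerDual_eq_top [FiniteDimensional ℝ E] (K : ProperCone ℝ E)
    (hK : ∀ v ∈ K, -v ∈ K → v = 0) :
    Submodule.span ℝ (innerDual (K : Set E) : Set E) = ⊤ := by
  rw [← Submodule.orthogonal_eq_bot_iff, Submodule.eq_bot_iff]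
  intro u hu
  have hperp : ∀ z ∈ innerDual (K : Set E), ⟪z, u⟫ = 0 := fun z hz =>
    (Submodule.mem_orthogonal _ u).1 hu z (Submodule.subset_span hz)
  refine hK u ?_ ?_ <;> rw [← innerDual_innerDual K] <;> refine mem_innerDual.2 fun z hz => ?_
  · exact (hperp z hz).ge
  · rw [inner_neg_right, hperp z hz, neg_zero]

theorem ProperCone.interior_innerDual_nonempty [FiniteDimensional ℝ E] (K : ProperCone ℝ E)
    (hK : ∀ v ∈ K, -v ∈ K → v = 0) : (interior (innerDual (K : Set E) : Set E)).Nonempty := by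
  have h0 : (0 : E) ∈ (innerDual (K : Set E) : Set E) := zero_mem _
  rw [(innerDual (K : Set E)).convex.interior_nonempty_iff_affineSpan_eq_top,
    AffineSubspace.affineSpan_eq_top_iff_vectorSpan_eq_top_of_nonempty ℝ E E ⟨0, h0⟩,
    vectorSpan_eq_span_vsub_set_right ℝ h0]
  simpa using K.span_innerDual_eq_top hK

end InnerDual

section StrictDual

variable {n : ℕ} {C : Set (EuclideanSpace ℝ (Fin n))}

theorem innerStrictDualCone_subset_innerDual :
    innerStrictDualCone C ⊆ innerDual (closure C) := by
  intro y hy x hx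
  rcases eq_or_ne x 0 with rfl | hx0
  · simp
  · exact (real_inner_comm x y ▸ hy x hx hx0).le

theorem interior_innerDual_subset_innerStrictDualCone :
    interior (innerDual (closure C) : Set (EuclideanSpace ℝ (Fin n))) ⊆ innerStrictDualCone C :=
  fun y hy x hx hx0 => by
    have hx' : x ∈ innerDual (innerDual (closure C) : Set (EuclideanSpace ℝ (Fin n))) :=
      mem_innerDual.2 fun z hz => real_inner_comm z x ▸ mem_innerDual.1 hz hx
    exact inner_pos_of_mem_interior_of_mem_innerDual hy hx' hx0

theorem closure_innerStrictDualCone (hconv : Convex ℝ C)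
    (hcone : ∀ x ∈ C, ∀ t : ℝ, 0 < t → t • x ∈ C) (hne : C.Nonempty)
    (hprop : ∀ v ∈ closure C, -v ∈ closure C → v = 0) :
    closure (innerStrictDualCone C) = innerDual (closure C) := by
  obtain ⟨K, hK⟩ := exists_properCone_coe_eq_closure hconv hcone hne
  have hint := K.interior_innerDual_nonempty (by simpa [← SetLike.mem_coe, hK] using hprop)
  rw [hK] at hint
  refine (closure_minimal innerStrictDualCone_subset_innerDual (innerDual _).isClosed).antisymm ?_
  have hcl := (innerDual (closure C)).convex.closure_interior_eq_closure_of_nonempty_interior hint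
  rw [(innerDual (closure C)).isClosed.closure_eq] at hcl
  exact hcl ▸ closure_mono interior_innerDual_subset_innerStrictDualCone

end StrictDual

section AugmentedBoundary

variable {n : ℕ} {C : Set (EuclideanSpace ℝ (Fin n))}
  {p : EuclideanSpace ℝ (Fin n) × EuclideanSpace ℝ (Fin n)}

theorem swap_mem_augBoundary_innerStrictDualCone
    (hD : closure (innerStrictDualCone C) = innerDual (closure C)) (hp : p ∈ augBoundary C) :
    p.swap ∈ augBoundary (innerStrictDualCone C) := by
  obtain ⟨ha, ha1, hb1, hba, hbpos⟩ := hp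
  have ha_cl := frontier_subset_closure ha
  have ha0 : p.1 ≠ 0 := by rintro h; simp [h] at ha1
  have hb : p.2 ∈ innerDual (closure C) := by
    rw [innerDual_closure]
    exact mem_innerDual.2 fun y hy => real_inner_comm y p.2 ▸ (hbpos y hy).le
  have hb_notMem : p.2 ∉ innerStrictDualCone C := fun h => (h p.1 ha_cl ha0).ne' hba
  refine ⟨⟨hD ▸ hb, fun h => hb_notMem (interior_subset h)⟩, hb1, ha1,
    real_inner_comm p.2 p.1 ▸ hba, fun y hy => real_inner_comm y p.1 ▸ hy p.1 ha_cl ha0⟩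

theorem mem_augBoundary_of_swap_mem_augBoundary_innerStrictDualCone (hopen : IsOpen C)
    (hbid : (innerDual (innerDual (closure C) : Set (EuclideanSpace ℝ (Fin n))) :
      Set (EuclideanSpace ℝ (Fin n))) = closure C)
    (hD : closure (innerStrictDualCone C) = innerDual (closure C))
    (hp : p.swap ∈ augBoundary (innerStrictDualCone C)) : p ∈ augBoundary C := by
  obtain ⟨hb, hb1, ha1, hab, hapos⟩ := hp
  have hb_dual : p.2 ∈ innerDual (closure C) := by
    rw [← SetLike.mem_coe, ← hD]
    exact frontier_subset_closure hb
  have hb0 : p.2 ≠ 0 := by rintro h; simp [h] at hb1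
  have hbpos (y : EuclideanSpace ℝ (Fin n)) (hy : y ∈ C) : 0 < ⟪p.2, y⟫ :=
    real_inner_comm p.2 y ▸ inner_pos_of_mem_interior_of_mem_innerDual
      (hopen.interior_eq.symm ▸ hy) (innerDual_le_innerDual subset_closure hb_dual) hb0
  have ha_notMem : p.1 ∉ C := fun h => (hbpos p.1 h).ne' (real_inner_comm p.1 p.2 ▸ hab)
  have ha_cl : p.1 ∈ closure C := by
    rw [← hbid, ← hD, innerDual_closure]
    exact mem_innerDual.2 fun y hy => real_inner_comm p.1 y ▸ (hapos y hy).le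
  exact ⟨hopen.frontier_eq ▸ ⟨ha_cl, ha_notMem⟩, ha1, hb1, real_inner_comm p.1 p.2 ▸ hab, hbpos⟩

end AugmentedBoundary

/-- The duality map `D_Ω : (x,h) ↦ (h,x)` is a homeomorphism
from the augmented boundary of a properly convex open domain `Ω` (with cone
`C`) onto the augmented boundary of its dual `Ω*` (with cone `C*`); its
inverse is `D_{Ω*}`, i.e. also given by coordinate swap. -/
theorem duality_map_homeomorphism
    {n : ℕ} (C : Set (EuclideanSpace ℝ (Fin (n + 1))))
    (hopen : IsOpen C) (hconv : Convex ℝ C)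
    (hcone : ∀ x ∈ C, ∀ t : ℝ, 0 < t → t • x ∈ C)
    (hne : C.Nonempty)
    (hprop : ∀ v ∈ closure C, -v ∈ closure C → v = 0) :
    ∃ φ : ↥(augBoundary C) ≃ₜ ↥(augBoundary (innerStrictDualCone C)),
      (∀ p : ↥(augBoundary C),
        (φ p : EuclideanSpace ℝ (Fin (n + 1)) × EuclideanSpace ℝ (Fin (n + 1))) =
          ((p : EuclideanSpace ℝ (Fin (n + 1)) × EuclideanSpace ℝ (Fin (n + 1))).2,
           (p : EuclideanSpace ℝ (Fin (n + 1)) × EuclideanSpace ℝ (Fin (n + 1))).1)) ∧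
      (∀ q : ↥(augBoundary (innerStrictDualCone C)),
        (φ.symm q : EuclideanSpace ℝ (Fin (n + 1)) × EuclideanSpace ℝ (Fin (n + 1))) =
          ((q : EuclideanSpace ℝ (Fin (n + 1)) × EuclideanSpace ℝ (Fin (n + 1))).2,
           (q : EuclideanSpace ℝ (Fin (n + 1)) × EuclideanSpace ℝ (Fin (n + 1))).1)) := by
  have hD := closure_innerStrictDualCone hconv hcone hne hprop
  have hbid := innerDual_innerDual_closure hconv hcone hne
  have hswap (p : EuclideanSpace ℝ (Fin (n + 1)) × EuclideanSpace ℝ (Fin (n + 1))) :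
      p ∈ augBoundary C ↔ p.swap ∈ augBoundary (innerStrictDualCone C) :=
    ⟨swap_mem_augBoundary_innerStrictDualCone hD,
      mem_augBoundary_of_swap_mem_augBoundary_innerStrictDualCone hopen hbid hD⟩
  exact ⟨(Homeomorph.prodComm _ _).subtype hswap, fun _ => rfl, fun _ => rfl⟩
end
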